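/- The real Lie subalgebra of d×d complex matrices generated by 𝔥 ∪ 𝔥' is exactly the Lie algebra u(d) of skew-Hermitian matrices: a d×d complex matrix M lies in the Lie subalgebra generated by 𝔥 ∪ 𝔥' if and only if Mᴴ = −M (conjugate transpose equals negative). -/

import Mathlib

/-!
Both generating sets consist of skew-Hermitian matrices (the Fourier matrix is unitary), and
skew-Hermitian matrices are closed under brackets; this gives one inclusion.
Conversely, let `D_j = diag(i e_j) ∈ 𝔥` and let `X = V D_0 V⁻¹ ∈ 𝔥'`, all of whose entries are
`i / d`. For `j ≠ k`, the double bracket `⁅D_k, ⁅D_j, X⁆⁆` kills every entry of `X` outside the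
positions `(j, k)` and `(k, j)`, leaving the elementary skew-Hermitian matrix
`z E_jk - z̄ E_kj` with `z = i / d ≠ 0`, and one more bracket with `D_j` replaces `z` by `i z`.
By real linearity all `z E_jk - z̄ E_kj` are in the span, and together with `𝔥` they span `u(d)`.
-/

open scoped Matrix

attribute [local instance 100] LieRing.ofAssociativeRing

/-- The d×d Fourier matrix V with entries V_{jk} = ω^{jk}/√d, ω = exp(2πi/d). -/
noncomputable def fourierV (d : ℕ) : Matrix (Fin d) (Fin d) ℂ :=
  Matrix.of fun j k =>
    Complex.exp (2 * Real.pi * Complex.I / d) ^ ((j : ℕ) * (k : ℕ)) / (Real.sqrt d : ℂ)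

/-- 𝔥: the diagonal matrices diag(iα₀,…,iα_{d−1}) with real αⱼ. -/
def diagLie (d : ℕ) : Set (Matrix (Fin d) (Fin d) ℂ) :=
  {A | ∃ α : Fin d → ℝ, A = Matrix.diagonal fun j => Complex.I * (α j : ℂ)}

/-- 𝔥' = V 𝔥 V⁻¹. -/
noncomputable def diagLieConj (d : ℕ) : Set (Matrix (Fin d) (Fin d) ℂ) :=
  {A | ∃ B ∈ diagLie d, A = fourierV d * B * (fourierV d)⁻¹}

open Complex Matrix Finset
open scoped ComplexConjugate

section SkewAdjoint

variable (R A : Type*) [CommRing R] [Star R] [TrivialStar R] [Ring A] [StarRing A]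
  [Algebra R A] [StarModule R A]

def skewAdjoint.lieSubalgebra : LieSubalgebra R A where
  carrier := skewAdjoint A
  add_mem' := add_mem
  zero_mem' := zero_mem _
  smul_mem' r _ hx := skewAdjoint.smul_mem r hx
  lie_mem' {x y} hx hy := by
    rw [SetLike.mem_coe, skewAdjoint.mem_iff] at hx hy ⊢
    rw [Ring.lie_def, star_sub, star_mul, star_mul, hx, hy]
    noncomm_ring

end SkewAdjoint

theorem geom_sum_eq_zero_of_pow_eq_one {R : Type*} [Ring R] [NoZeroDivisors R] {x : R} {n : ℕ}
    (hx : x ^ n = 1) (hx1 : x ≠ 1) : ∑ i ∈ range n, x ^ i = 0 := by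
  have h := geom_sum_mul x n
  rw [hx, sub_self] at h
  exact (mul_eq_zero.1 h).resolve_right (sub_ne_zero.2 hx1)

theorem Complex.ofReal_sqrt_natCast_mul_self (n : ℕ) : (√n : ℂ) * √n = n := by
  rw [← ofReal_mul, Real.mul_self_sqrt (Nat.cast_nonneg n), ofReal_natCast]

theorem Complex.real_submodule_eq_top_of_mem_of_I_mul_mem {p : Submodule ℝ ℂ} {c : ℂ}
    (hc : c ≠ 0) (h₁ : c ∈ p) (h₂ : I * c ∈ p) : p = ⊤ := by
  refine Submodule.eq_top_iff'.2 fun z => ?_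
  have hz : z = (z / c).re • c + (z / c).im • (I * c) := by
    rw [real_smul, real_smul, ← mul_assoc, ← add_mul, re_add_im, div_mul_cancel₀ _ hc]
  rw [hz]
  exact p.add_mem (p.smul_mem _ h₁) (p.smul_mem _ h₂)

namespace Matrix

variable {n : Type*}

theorem conj_apply_of_conjTranspose_eq_neg {M : Matrix n n ℂ} (hM : Mᴴ = -M) (p q : n) :
    conj (M p q) = -M q p := by
  simpa using congr_fun₂ hM q p

variable [DecidableEq n]

theorem lie_diagonal_apply [Fintype n] {α : Type*} [CommRing α] (f : n → α) (A : Matrix n n α)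
    (p q : n) :
    ⁅diagonal f, A⁆ p q = (f p - f q) * A p q := by
  rw [Ring.lie_def, sub_apply, diagonal_mul, mul_diagonal]
  ring

def skewSingle (j k : n) : ℂ →ₗ[ℝ] Matrix n n ℂ where
  toFun z := single j k z - single k j (conj z)
  map_add' z w := by simp only [map_add, single_add]; abel
  map_smul' r z := by
    simp only [RingHom.id_apply, smul_sub, smul_single, real_smul, map_mul, conj_ofReal]

theorem skewSingle_apply (j k : n) (z : ℂ) :
    skewSingle j k z = single j k z - single k j (conj z) := rfl

theorem skewSingle_self (j : n) (z : ℂ) :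
    skewSingle j j z = diagonal (Pi.single j (z - conj z)) := by
  rw [skewSingle_apply, ← diagonal_single, ← diagonal_single, diagonal_sub, Pi.single_sub]
  rfl

theorem skewSingle_apply_of_conjTranspose_eq_neg {M : Matrix n n ℂ} (hM : Mᴴ = -M) (p q : n) :
    skewSingle p q (M p q) = single p q (M p q) + single q p (M q p) := by
  rw [skewSingle_apply, conj_apply_of_conjTranspose_eq_neg hM, ← single_neg, sub_neg_eq_add]

theorem sum_skewSingle_of_conjTranspose_eq_neg [Fintype n] {M : Matrix n n ℂ} (hM : Mᴴ = -M) :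
    ∑ p, ∑ q, skewSingle p q (M p q) = (2 : ℝ) • M := by
  simp_rw [skewSingle_apply_of_conjTranspose_eq_neg hM, sum_add_distrib]
  rw [sum_comm (f := fun p q => single q p (M q p)), ← matrix_eq_sum_single, two_smul]

theorem lie_diagonal_single_I_skewSingle [Fintype n] {j k : n} (hjk : j ≠ k) (z : ℂ) :
    ⁅diagonal (Pi.single j I), skewSingle j k z⁆ = skewSingle j k (I * z) := by
  ext p q
  simp only [lie_diagonal_apply, skewSingle_apply, sub_apply, single_apply, Pi.single_apply,
    map_mul, conj_I]
  split_ifs <;> grind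

theorem lie_diagonal_single_I_lie_diagonal_single_I [Fintype n] {j k : n} (hjk : j ≠ k)
    {X : Matrix n n ℂ} (hX : Xᴴ = -X) :
    ⁅diagonal (Pi.single k I), ⁅diagonal (Pi.single j I), X⁆⁆ = skewSingle j k (X j k) := by
  ext p q
  simp only [lie_diagonal_apply, skewSingle_apply, sub_apply, single_apply, Pi.single_apply,
    conj_apply_of_conjTranspose_eq_neg hX]
  split_ifs <;> grind [I_mul_I]

end Matrix

section

variable (d : ℕ)

theorem diagonal_mem_diagLie {f : Fin d → ℂ} (hf : ∀ p, (f p).re = 0) :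
    diagonal f ∈ diagLie d :=
  ⟨fun p => (f p).im, congrArg diagonal <| funext fun p => Complex.ext (by simp [hf]) (by simp)⟩

theorem diagonal_single_mem_diagLie (j : Fin d) {z : ℂ} (hz : z.re = 0) :
    diagonal (Pi.single j z) ∈ diagLie d :=
  diagonal_mem_diagLie d fun p => by rcases eq_or_ne p j with rfl | hpj <;> simp [*]

theorem diagLie_subset_skewAdjoint : diagLie d ⊆ skewAdjoint (Matrix (Fin d) (Fin d) ℂ) := by
  rintro _ ⟨α, rfl⟩
  rw [SetLike.mem_coe, skewAdjoint.mem_iff, star_eq_conjTranspose, diagonal_conjTranspose,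
    diagonal_neg]
  congr 1
  funext p
  simp

variable [NeZero d]

theorem fourierV_mul_conjTranspose : fourierV d * (fourierV d)ᴴ = 1 := by
  set ω := cexp (2 * Real.pi * I / d)
  have hω : IsPrimitiveRoot ω d := isPrimitiveRoot_exp d (NeZero.ne d)
  have hconj : conj ω = ω⁻¹ := (inv_eq_conj (hω.norm'_eq_one (NeZero.ne d))).symm
  ext p q
  have entry : (fourierV d * (fourierV d)ᴴ) p q =
      (∑ m ∈ range d, (ω ^ (p : ℕ) * ω⁻¹ ^ (q : ℕ)) ^ m) / d := by
    rw [← Fin.sum_univ_eq_sum_range (fun m : ℕ => (ω ^ (p : ℕ) * ω⁻¹ ^ (q : ℕ)) ^ m), sum_div,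
      mul_apply]
    refine sum_congr rfl fun m _ => ?_
    have hV (j k : Fin d) : fourierV d j k = ω ^ ((j : ℕ) * k) / √d := rfl
    rw [conjTranspose_apply, hV, hV, star_def, map_div₀, map_pow, conj_ofReal, hconj,
      div_mul_div_comm, ofReal_sqrt_natCast_mul_self, mul_pow, ← pow_mul, ← pow_mul]
  rw [entry]
  rcases eq_or_ne p q with rfl | hpq
  · rw [inv_pow, mul_inv_cancel₀ (pow_ne_zero _ (hω.ne_zero (NeZero.ne d)))]
    simp [NeZero.ne d]
  · rw [geom_sum_eq_zero_of_pow_eq_one, zero_div, one_apply_ne hpq]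
    · rw [mul_pow, ← pow_mul, ← pow_mul, mul_comm (p : ℕ), mul_comm (q : ℕ), pow_mul, pow_mul,
        inv_pow, hω.pow_eq_one]
      simp
    · rw [inv_pow, Ne, mul_inv_eq_one₀ (pow_ne_zero _ (hω.ne_zero (NeZero.ne d)))]
      exact fun h => hpq (Fin.ext (hω.pow_inj p.isLt q.isLt h))

theorem inv_fourierV : (fourierV d)⁻¹ = (fourierV d)ᴴ :=
  inv_eq_right_inv (fourierV_mul_conjTranspose d)

theorem fourierV_mul_diagonal_single_zero_mul_inv :
    fourierV d * diagonal (Pi.single 0 I) * (fourierV d)⁻¹ = of fun _ _ => I / d := by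
  ext j k
  rw [inv_fourierV, mul_apply, sum_eq_single 0]
  · simp [fourierV, mul_diagonal]
    rw [← ofReal_sqrt_natCast_mul_self]
    ring
  · intro m _ hm
    simp [mul_diagonal, hm]
  · simp

theorem diagLieConj_subset_skewAdjoint :
    diagLieConj d ⊆ skewAdjoint (Matrix (Fin d) (Fin d) ℂ) := by
  rintro _ ⟨B, hB, rfl⟩
  rw [inv_fourierV, ← star_eq_conjTranspose]
  exact skewAdjoint.conjugate (diagLie_subset_skewAdjoint d hB) _

theorem lieSpan_diagLie_union_diagLieConj_le :
    LieSubalgebra.lieSpan ℝ _ (diagLie d ∪ diagLieConj d) ≤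
      skewAdjoint.lieSubalgebra ℝ (Matrix (Fin d) (Fin d) ℂ) :=
  LieSubalgebra.lieSpan_le.2 <|
    Set.union_subset (diagLie_subset_skewAdjoint d) (diagLieConj_subset_skewAdjoint d)

theorem skewSingle_mem_lieSpan (j k : Fin d) (z : ℂ) :
    skewSingle j k z ∈ LieSubalgebra.lieSpan ℝ _ (diagLie d ∪ diagLieConj d) := by
  set S := LieSubalgebra.lieSpan ℝ _ (diagLie d ∪ diagLieConj d)
  rcases eq_or_ne j k with rfl | hjk
  · rw [skewSingle_self]
    exact LieSubalgebra.subset_lieSpan (Or.inl (diagonal_single_mem_diagLie d j (by simp)))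
  have hD (i : Fin d) : diagonal (Pi.single i I) ∈ S :=
    LieSubalgebra.subset_lieSpan (Or.inl (diagonal_single_mem_diagLie d i I_re))
  set X := fourierV d * diagonal (Pi.single 0 I) * (fourierV d)⁻¹
  have hX : X ∈ S :=
    LieSubalgebra.subset_lieSpan (Or.inr ⟨_, diagonal_single_mem_diagLie d 0 I_re, rfl⟩)
  have hXskew : Xᴴ = -X := lieSpan_diagLie_union_diagLieConj_le d hX
  have hXjk : X j k ≠ 0 := by simp [X, fourierV_mul_diagonal_single_zero_mul_inv, NeZero.ne d]
  have h₁ : skewSingle j k (X j k) ∈ S :=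
    lie_diagonal_single_I_lie_diagonal_single_I hjk hXskew ▸
      S.lie_mem (hD k) (S.lie_mem (hD j) hX)
  have h₂ : skewSingle j k (I * X j k) ∈ S :=
    lie_diagonal_single_I_skewSingle hjk _ ▸ S.lie_mem (hD j) h₁
  have htop := real_submodule_eq_top_of_mem_of_I_mul_mem
    (p := S.toSubmodule.comap (skewSingle j k)) hXjk h₁ h₂
  exact Submodule.eq_top_iff'.1 htop z

end

/-- The real Lie subalgebra generated by 𝔥 ∪ 𝔥' is exactly u(d): a d×d complex
    matrix M lies in it if and only if Mᴴ = −M. -/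
theorem lieSpan_diag_conj_eq_skewHermitian (d : ℕ) [NeZero d]
    (M : Matrix (Fin d) (Fin d) ℂ) :
    M ∈ LieSubalgebra.lieSpan ℝ (Matrix (Fin d) (Fin d) ℂ) (diagLie d ∪ diagLieConj d) ↔
      Mᴴ = -M := by
  refine ⟨fun hM => lieSpan_diagLie_union_diagLieConj_le d hM, fun hM => ?_⟩
  rw [← inv_smul_smul₀ (two_ne_zero' ℝ) M, ← sum_skewSingle_of_conjTranspose_eq_neg hM]
  exact LieSubalgebra.smul_mem _ _ <|
    sum_mem fun p _ => sum_mem fun q _ => skewSingle_mem_lieSpan d p q _
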